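/- Let X ~ NB(μ, b), and conditional on X = x let X1 ~ BetaBinomial(x, εb', (1-ε)b') for b' > 0, ε ∈ (0,1); set X2 = X − X1. Then Cov(X1, X2) = ε(1-ε)(μ²/b)(1 − (b+1)/(b'+1)). In particular Cov(X1, X2) = 0 if and only if b' = b; the covariance is positive when b' > b and negative when b' < b. -/

import Mathlib

/-- The negative binomial pmf in the mean/overdispersion parameterization `NB(μ, b)`. -/
noncomputable def nbPMF (μ b : ℝ) (k : ℕ) : ℝ :=
  Real.Gamma (k + b) / (Real.Gamma b * (Nat.factorial k)) *
    (μ / (μ + b)) ^ k * (b / (μ + b)) ^ b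

/-- The beta function `B(a, c) = Γ(a) Γ(c) / Γ(a + c)`. -/
noncomputable def betaFn (a c : ℝ) : ℝ :=
  Real.Gamma a * Real.Gamma c / Real.Gamma (a + c)

/-- The beta-binomial pmf with `n` trials and shape parameters `a, c`, evaluated at `k`. -/
noncomputable def betaBinomPMF (n : ℕ) (a c : ℝ) (k : ℕ) : ℝ :=
  (n.choose k) * betaFn ((k : ℝ) + a) (((n - k : ℕ) : ℝ) + c) / betaFn a c

/-!
Let `(r)_k = r (r + 1) ⋯ (r + k - 1)` and `multichoose r k = (r)_k / k!`. With `p = μ / (μ + b)`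
the negative binomial weights are `multichoose b x * p ^ x * (1 - p) ^ b`, normalised by the
binomial series `∑ₓ multichoose b x * p ^ x = (1 - p) ^ (-b)`; the beta-binomial weights are
`multichoose a k * multichoose c (n - k) / multichoose (a + c) n`, normalised by the Vandermonde
identity for `multichoose`. Since `(x + r).descFactorial r * multichoose b (x + r) =
(b)_r * multichoose (b + r) x`, every factorial moment is a normalisation at shifted parameters:
`E[X.descFactorial r] = (b)_r (μ / b) ^ r` and
`E[K.descFactorial r | X = n] = n.descFactorial r * (a)_r / (a + c)_r`. Conditioning on `X` gives
`E X₁ = εμ`, `E X₂ = (1 - ε)μ` and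
`E[X₁ X₂] = ε(1 - ε) b' / (b' + 1) · E[X (X - 1)] = ε(1 - ε) b' / (b' + 1) · (b + 1) μ² / b`.
-/

open Finset Nat

namespace Ring

variable {R : Type*} [CommRing R] [BinomialRing R]

theorem multichoose_add (r s : R) (k : ℕ) :
    multichoose (r + s) k = ∑ ij ∈ antidiagonal k, multichoose r ij.1 * multichoose s ij.2 := by
  have h := add_choose_eq k (Commute.all (-r) (-s))
  rw [← neg_add, choose_neg'] at h
  rw [← smul_left_cancel_iff (Int.negOnePow k), h, smul_sum]
  refine sum_congr rfl fun ij hij => ?_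
  rw [choose_neg', choose_neg', smul_mul_smul_comm, ← Int.negOnePow_add, ← Nat.cast_add,
    mem_antidiagonal.1 hij]

theorem factorial_mul_multichoose (r : R) (n : ℕ) :
    (n ! : R) * multichoose r n = (ascPochhammer R n).eval r := by
  rw [← nsmul_eq_mul, factorial_nsmul_multichoose_eq_ascPochhammer,
    Polynomial.ascPochhammer_smeval_eq_eval]

theorem descFactorial_mul_multichoose (r : R) (n m : ℕ) :
    ((n + m).descFactorial m : R) * multichoose r (n + m) =
      (ascPochhammer R m).eval r * multichoose (r + m) n := by
  -- Mathlib registers this field of `BinomialRing` only as a local instance.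
  have := BinomialRing.toIsAddTorsionFree (R := R)
  apply (nsmul_right_inj (factorial_ne_zero n)).mp
  have hfac : n ! * (n + m).descFactorial m = (n + m)! := by
    simpa using factorial_mul_descFactorial (le_add_left m n)
  rw [nsmul_eq_mul, nsmul_eq_mul, ← mul_assoc, ← Nat.cast_mul, hfac, factorial_mul_multichoose,
    mul_left_comm, factorial_mul_multichoose, add_comm n m, ← ascPochhammer_mul]
  simp only [Polynomial.eval_mul, Polynomial.eval_comp, Polynomial.eval_add, Polynomial.eval_X,
    Polynomial.eval_natCast]

theorem multichoose_pos [LinearOrder R] [IsStrictOrderedRing R] {r : R} (hr : 0 < r) (n : ℕ) :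
    0 < multichoose r n :=
  pos_of_mul_pos_right (factorial_mul_multichoose r n ▸ ascPochhammer_pos n r hr) (by positivity)

end Ring

theorem Real.Gamma_natCast_add {b : ℝ} (hb : 0 < b) (x : ℕ) :
    Real.Gamma (x + b) = (ascPochhammer ℝ x).eval b * Real.Gamma b := by
  induction x with
  | zero => simp
  | succ x ih =>
    rw [Nat.cast_succ, add_right_comm, Real.Gamma_add_one (by positivity), ih,
      ascPochhammer_succ_eval]
    ring

theorem hasSum_multichoose_mul_pow (β : ℝ) {p : ℝ} (hp : |p| < 1) :
    HasSum (fun n => Ring.multichoose β n * p ^ n) ((1 - p) ^ (-β)) := by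
  have h := (Real.one_div_one_sub_rpow_hasFPowerSeriesOnBall_zero β).hasSum
    (y := p) (by simpa [Metric.mem_eball, enorm_eq_nnnorm, ← NNReal.coe_lt_one] using hp)
  simp only [FormalMultilinearSeries.ofScalars_apply_eq, smul_eq_mul, zero_add] at h
  rw [Real.rpow_neg (by linarith [le_abs_self p]), inv_eq_one_div]
  simpa only [Ring.multichoose_eq] using h

section NegativeBinomial

variable {μ b : ℝ}

theorem nbPMF_eq (hb : 0 < b) (x : ℕ) :
    nbPMF μ b x = Ring.multichoose b x * (μ / (μ + b)) ^ x * (b / (μ + b)) ^ b := by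
  rw [nbPMF, Real.Gamma_natCast_add hb, ← Ring.factorial_mul_multichoose]
  have := (Real.Gamma_pos_of_pos hb).ne'
  field_simp

theorem nbPMF_nonneg (hμ : 0 ≤ μ) (hb : 0 < b) (x : ℕ) : 0 ≤ nbPMF μ b x := by
  unfold nbPMF
  positivity

theorem hasSum_descFactorial_mul_nbPMF (hμ : 0 ≤ μ) (hb : 0 < b) (r : ℕ) :
    HasSum (fun x => nbPMF μ b x * x.descFactorial r)
      ((ascPochhammer ℝ r).eval b * (μ / b) ^ r) := by
  set p := μ / (μ + b) with hp_def
  set q := b / (μ + b) with hq_def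
  have hq : 0 < q := by positivity
  have hpq : 1 - p = q := by rw [hp_def, hq_def]; field_simp; ring
  have hp : |p| < 1 := by
    rw [abs_of_nonneg (by positivity)]
    linarith
  have hlow : ∑ x ∈ range r, nbPMF μ b x * x.descFactorial r = 0 :=
    sum_eq_zero fun x hx => by
      rw [descFactorial_eq_zero_iff_lt.2 (mem_range.1 hx), cast_zero, mul_zero]
  have hshift (x : ℕ) : nbPMF μ b (x + r) * (x + r).descFactorial r =
      (ascPochhammer ℝ r).eval b * p ^ r * q ^ b * (Ring.multichoose (b + r) x * p ^ x) := by
    rw [nbPMF_eq hb, mul_comm, ← mul_assoc, ← mul_assoc, Ring.descFactorial_mul_multichoose,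
      pow_add]
    ring
  have hsum : (ascPochhammer ℝ r).eval b * p ^ r * q ^ b * q ^ (-(b + r)) =
      (ascPochhammer ℝ r).eval b * (μ / b) ^ r := by
    rw [mul_assoc, ← Real.rpow_add hq, show b + -(b + r) = -(r : ℝ) by ring,
      Real.rpow_neg hq.le, Real.rpow_natCast, mul_assoc, ← div_eq_mul_inv, ← div_pow, hp_def,
      hq_def, div_div_div_cancel_right₀ (by positivity)]
  have h := (hasSum_multichoose_mul_pow (b + r) hp).mul_left
    ((ascPochhammer ℝ r).eval b * p ^ r * q ^ b)
  rw [hpq, hsum, ← funext hshift] at h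
  exact (hasSum_nat_add_iff' r).mp (by rwa [hlow, sub_zero])

theorem hasSum_nbPMF_mul_self (hμ : 0 ≤ μ) (hb : 0 < b) :
    HasSum (fun x => nbPMF μ b x * x) μ := by
  simpa [mul_div_cancel₀ μ hb.ne'] using hasSum_descFactorial_mul_nbPMF hμ hb 1

theorem hasSum_nbPMF_mul_mul_sub_one (hμ : 0 ≤ μ) (hb : 0 < b) :
    HasSum (fun x => nbPMF μ b x * (x * (x - 1))) ((b + 1) * μ ^ 2 / b) := by
  convert hasSum_descFactorial_mul_nbPMF hμ hb 2 using 1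
  · simp only [Nat.cast_descFactorial_two]
  · simp only [ascPochhammer_succ_eval, ascPochhammer_one, Polynomial.eval_X, cast_one]
    field_simp

end NegativeBinomial

section BetaBinomial

variable {a c : ℝ}

theorem betaBinomPMF_eq_of_le (ha : 0 < a) (hc : 0 < c) {n k : ℕ} (hk : k ≤ n) :
    betaBinomPMF n a c k =
      Ring.multichoose a k * Ring.multichoose c (n - k) / Ring.multichoose (a + c) n := by
  have hn : (k : ℝ) + a + ((n - k : ℕ) + c) = n + (a + c) := by
    rw [Nat.cast_sub hk]
    ring
  rw [betaBinomPMF, betaFn, betaFn, hn, Real.Gamma_natCast_add ha, Real.Gamma_natCast_add hc,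
    Real.Gamma_natCast_add (add_pos ha hc), ← Ring.factorial_mul_multichoose,
    ← Ring.factorial_mul_multichoose, ← Ring.factorial_mul_multichoose, Nat.cast_choose ℝ hk]
  have := (Real.Gamma_pos_of_pos ha).ne'
  have := (Real.Gamma_pos_of_pos hc).ne'
  have := (Real.Gamma_pos_of_pos (add_pos ha hc)).ne'
  have := (Ring.multichoose_pos (add_pos ha hc) n).ne'
  field_simp

theorem betaBinomPMF_eq_zero_of_lt {n k : ℕ} (hk : n < k) : betaBinomPMF n a c k = 0 := by
  rw [betaBinomPMF, Nat.choose_eq_zero_of_lt hk, cast_zero, zero_mul, zero_div]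

theorem betaBinomPMF_nonneg (ha : 0 < a) (hc : 0 < c) (n k : ℕ) : 0 ≤ betaBinomPMF n a c k := by
  unfold betaBinomPMF betaFn
  positivity

theorem hasSum_betaBinomPMF (ha : 0 < a) (hc : 0 < c) (n : ℕ) :
    HasSum (betaBinomPMF n a c) 1 := by
  have hout : ∀ k ∉ range (n + 1), betaBinomPMF n a c k = 0 := fun k hk =>
    betaBinomPMF_eq_zero_of_lt (by simpa using hk)
  have h : HasSum (betaBinomPMF n a c) _ := hasSum_sum_of_ne_finset_zero hout
  rwa [sum_congr rfl fun k hk => betaBinomPMF_eq_of_le ha hc (mem_range_succ_iff.1 hk), ← sum_div,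
    ← Nat.sum_antidiagonal_eq_sum_range_succ
      (fun i j => Ring.multichoose a i * Ring.multichoose c j),
    ← Ring.multichoose_add, div_self (Ring.multichoose_pos (add_pos ha hc) n).ne'] at h

theorem betaBinomPMF_add_mul_descFactorial (ha : 0 < a) (hc : 0 < c) (m r i : ℕ) :
    betaBinomPMF (m + r) a c (i + r) * (i + r).descFactorial r =
      (m + r).descFactorial r * (ascPochhammer ℝ r).eval a / (ascPochhammer ℝ r).eval (a + c) *
        betaBinomPMF m (a + r) c i := by
  rcases le_or_gt i m with him | hmi
  · have har : 0 < a + r := by positivity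
    rw [betaBinomPMF_eq_of_le ha hc (Nat.add_le_add_right him r),
      betaBinomPMF_eq_of_le har hc him, Nat.add_sub_add_right, add_right_comm a]
    have h1 := Ring.descFactorial_mul_multichoose a i r
    have h2 := Ring.descFactorial_mul_multichoose (a + c) m r
    have := (Ring.multichoose_pos (add_pos ha hc) (m + r)).ne'
    have := (Ring.multichoose_pos (by positivity : 0 < a + c + r) m).ne'
    have := (ascPochhammer_pos r (a + c) (add_pos ha hc)).ne'
    field_simp
    grind
  · rw [betaBinomPMF_eq_zero_of_lt (Nat.add_lt_add_right hmi r), betaBinomPMF_eq_zero_of_lt hmi,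
      zero_mul, mul_zero]

theorem hasSum_betaBinomPMF_mul_descFactorial (ha : 0 < a) (hc : 0 < c) (n r : ℕ) :
    HasSum (fun k => betaBinomPMF n a c k * k.descFactorial r)
      (n.descFactorial r * (ascPochhammer ℝ r).eval a / (ascPochhammer ℝ r).eval (a + c)) := by
  rcases lt_or_ge n r with hnr | hrn
  · rw [descFactorial_eq_zero_iff_lt.2 hnr, cast_zero, zero_mul, zero_div]
    convert hasSum_zero with k
    rcases lt_or_ge n k with hnk | hkn
    · rw [betaBinomPMF_eq_zero_of_lt hnk, zero_mul]
    · rw [descFactorial_eq_zero_iff_lt.2 (hkn.trans_lt hnr), cast_zero, mul_zero]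
  obtain ⟨m, rfl⟩ := Nat.exists_eq_add_of_le' hrn
  have hlow : ∑ k ∈ range r, betaBinomPMF (m + r) a c k * k.descFactorial r = 0 :=
    sum_eq_zero fun k hk => by
      rw [descFactorial_eq_zero_iff_lt.2 (mem_range.1 hk), cast_zero, mul_zero]
  refine (hasSum_nat_add_iff' r).mp ?_
  rw [hlow, sub_zero, funext (betaBinomPMF_add_mul_descFactorial ha hc m r)]
  simpa using (hasSum_betaBinomPMF (by positivity) hc m).mul_left
    ((m + r).descFactorial r * (ascPochhammer ℝ r).eval a / (ascPochhammer ℝ r).eval (a + c))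

theorem hasSum_betaBinomPMF_mul_self (ha : 0 < a) (hc : 0 < c) (n : ℕ) :
    HasSum (fun k => betaBinomPMF n a c k * k) (n * (a / (a + c))) := by
  have h := hasSum_betaBinomPMF_mul_descFactorial ha hc n 1
  simp only [descFactorial_one, ascPochhammer_one, Polynomial.eval_X] at h
  rwa [mul_div_assoc] at h

theorem hasSum_betaBinomPMF_mul_sub (ha : 0 < a) (hc : 0 < c) (n : ℕ) :
    HasSum (fun k => betaBinomPMF n a c k * (n - k)) (n * (c / (a + c))) := by
  have h : HasSum (fun k => betaBinomPMF n a c k * (n - k)) _ :=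
    (((hasSum_betaBinomPMF ha hc n).mul_right (n : ℝ)).sub
      (hasSum_betaBinomPMF_mul_self ha hc n)).congr_fun fun k => by ring
  convert h using 1
  have : a + c ≠ 0 := (add_pos ha hc).ne'
  field_simp
  ring

theorem hasSum_betaBinomPMF_mul_mul_sub (ha : 0 < a) (hc : 0 < c) (n : ℕ) :
    HasSum (fun k => betaBinomPMF n a c k * (k * (n - k)))
      (n * (n - 1) * (a * c / ((a + c) * (a + c + 1)))) := by
  have h2 := hasSum_betaBinomPMF_mul_descFactorial ha hc n 2
  simp only [Nat.cast_descFactorial_two, ascPochhammer_succ_eval, ascPochhammer_one,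
    Polynomial.eval_X, cast_one] at h2
  have h : HasSum (fun k => betaBinomPMF n a c k * (k * (n - k))) _ :=
    (((hasSum_betaBinomPMF_mul_self ha hc n).mul_left (n - 1 : ℝ)).sub h2).congr_fun
      fun k => by ring
  convert h using 1
  have : a + c ≠ 0 := (add_pos ha hc).ne'
  have : a + c + 1 ≠ 0 := by positivity
  field_simp
  ring

end BetaBinomial

theorem HasSum.prod_of_nonneg {α β : Type*} {f : α × β → ℝ} (hf : 0 ≤ f) {g : α → ℝ} {s : ℝ}
    (hfib : ∀ a, HasSum (fun b => f (a, b)) (g a)) (hg : HasSum g s) : HasSum f s := by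
  have hf_sum : Summable f := (summable_prod_of_nonneg hf).2
    ⟨fun a => (hfib a).summable, by simpa only [(hfib _).tsum_eq] using hg.summable⟩
  rw [hf_sum.hasSum_iff, hf_sum.tsum_prod' fun a => (hfib a).summable]
  simpa only [(hfib _).tsum_eq] using hg.tsum_eq

theorem hasSum_nbPMF_mul_betaBinomPMF_mul {μ b a c : ℝ} (hμ : 0 ≤ μ) (hb : 0 < b) (ha : 0 < a)
    (hc : 0 < c) {g : ℕ → ℕ → ℝ} (hg : ∀ x k, k ≤ x → 0 ≤ g x k) {m : ℕ → ℝ} {s : ℝ}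
    (hm : ∀ x, HasSum (fun k => betaBinomPMF x a c k * g x k) (m x))
    (hs : HasSum (fun x => nbPMF μ b x * m x) s) :
    HasSum (fun q : ℕ × ℕ => nbPMF μ b q.1 * betaBinomPMF q.1 a c q.2 * g q.1 q.2) s := by
  refine HasSum.prod_of_nonneg ?_ (fun x => ?_) hs
  · rintro ⟨x, k⟩
    rcases le_or_gt k x with hkx | hxk
    · exact mul_nonneg (mul_nonneg (nbPMF_nonneg hμ hb x) (betaBinomPMF_nonneg ha hc x k))
        (hg x k hkx)
    · simp [betaBinomPMF_eq_zero_of_lt hxk]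
  · simpa only [mul_assoc] using (hm x).mul_left (nbPMF μ b x)

/-- Covariance between the folds when thinning with a possibly misspecified overdispersion
parameter `b'`: if `X ~ NB(μ, b)`, `X1 | X = x ~ BetaBinomial(x, εb', (1-ε)b')`, and
`X2 = X − X1`, then `Cov(X1, X2) = ε(1-ε)(μ²/b)(1 − (b+1)/(b'+1))`; in particular the
covariance is zero iff `b' = b`, positive when `b' > b`, and negative when `b' < b`. -/
theorem nb_thinning_covariance (μ b b' ε : ℝ) (hμ : 0 < μ) (hb : 0 < b) (hb' : 0 < b')
    (hε : ε ∈ Set.Ioo (0 : ℝ) 1) :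
    let j : ℕ → ℕ → ℝ := fun x k => nbPMF μ b x * betaBinomPMF x (ε * b') ((1 - ε) * b') k
    let E : (ℕ → ℕ → ℝ) → ℝ := fun g => ∑' q : ℕ × ℕ, j q.1 q.2 * g q.1 q.2
    let cov : ℝ :=
      E (fun x k => (k : ℝ) * ((x : ℝ) - (k : ℝ))) -
        E (fun _ k => (k : ℝ)) * E (fun x k => (x : ℝ) - (k : ℝ))
    cov = ε * (1 - ε) * (μ ^ 2 / b) * (1 - (b + 1) / (b' + 1)) ∧
      (cov = 0 ↔ b' = b) ∧ (b < b' → 0 < cov) ∧ (b' < b → cov < 0) := by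
  intro j E cov
  obtain ⟨hε0, hε1⟩ := hε
  have ha : 0 < ε * b' := by positivity
  have hc : 0 < (1 - ε) * b' := mul_pos (sub_pos.2 hε1) hb'
  have hsplit : ε * b' + (1 - ε) * b' = b' := by ring
  have hE {g : ℕ → ℕ → ℝ} (hg : ∀ x k, k ≤ x → 0 ≤ g x k) {m : ℕ → ℝ} {s : ℝ}
      (hm : ∀ x, HasSum (fun k => betaBinomPMF x (ε * b') ((1 - ε) * b') k * g x k) (m x))
      (hs : HasSum (fun x => nbPMF μ b x * m x) s) : E g = s :=
    (hasSum_nbPMF_mul_betaBinomPMF_mul hμ.le hb ha hc hg hm hs).tsum_eq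
  have hE₁ : E (fun _ k => (k : ℝ)) = μ * ε :=
    hE (fun _ _ _ => by positivity) (hasSum_betaBinomPMF_mul_self ha hc)
      (by simpa only [hsplit, mul_div_cancel_right₀ ε hb'.ne', ← mul_assoc]
        using (hasSum_nbPMF_mul_self hμ.le hb).mul_right ε)
  have hE₂ : E (fun x k => (x : ℝ) - k) = μ * (1 - ε) :=
    hE (fun x k hkx => sub_nonneg.2 (cast_le.2 hkx)) (hasSum_betaBinomPMF_mul_sub ha hc)
      (by simpa only [hsplit, mul_div_cancel_right₀ (1 - ε) hb'.ne', ← mul_assoc]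
        using (hasSum_nbPMF_mul_self hμ.le hb).mul_right (1 - ε))
  have hE₁₂ : E (fun x k => (k : ℝ) * (x - k)) =
      (b + 1) * μ ^ 2 / b * (ε * b' * ((1 - ε) * b') / (b' * (b' + 1))) :=
    hE (fun x k hkx => mul_nonneg (cast_nonneg k) (sub_nonneg.2 (cast_le.2 hkx)))
      (hasSum_betaBinomPMF_mul_mul_sub ha hc)
      (by simpa only [hsplit, ← mul_assoc]
        using (hasSum_nbPMF_mul_mul_sub_one hμ.le hb).mul_right _)
  have hcov : cov = ε * (1 - ε) * μ ^ 2 / b * ((b' - b) / (b' + 1)) := by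
    simp only [cov, hE₁, hE₂, hE₁₂]
    field_simp
    ring
  have hC : 0 < ε * (1 - ε) * μ ^ 2 / b := by have := sub_pos.2 hε1; positivity
  have hb'₁ : 0 < b' + 1 := by positivity
  refine ⟨by rw [hcov]; field_simp; ring, ?_, fun h => ?_, fun h => ?_⟩ <;> rw [hcov]
  · simp [hC.ne', hb'₁.ne', sub_eq_zero]
  · exact mul_pos hC (div_pos (sub_pos.2 h) hb'₁)
  · exact mul_neg_of_pos_of_neg hC (div_neg_of_neg_of_pos (sub_neg.2 h) hb'₁)
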